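/- Let a, b be nonnegative integers with a > 2b. For each integer i ≥ 2, let B_i := B(KG(2i + a, i + b)). Then B_2 ⊆ B_3 ⊆ B_4 ⊆ ... ; that is, for every integer i ≥ 2, B(KG(2i + a, i + b)) ⊆ B(KG(2(i+1) + a, (i+1) + b)). -/

import Mathlib

/-- A proper coloring of `G` with colors in `Fin k`. -/
def IsProperColoring {V : Type*} (G : SimpleGraph V) {k : ℕ} (f : V → Fin k) : Prop :=
  ∀ u v : V, G.Adj u v → f u ≠ f v

/-- A vertex `v` is b-dominating w.r.t. the coloring `f` if every color appears
on the closed neighborhood of `v`. -/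
def IsBDominating {V : Type*} (G : SimpleGraph V) {k : ℕ} (f : V → Fin k) (v : V) : Prop :=
  ∀ i : Fin k, f v = i ∨ ∃ u : V, G.Adj v u ∧ f u = i

/-- A colorful (b-) coloring: a proper coloring in which every color class contains
a b-dominating vertex. -/
def IsColorfulColoring {V : Type*} (G : SimpleGraph V) {k : ℕ} (f : V → Fin k) : Prop :=
  IsProperColoring G f ∧ ∀ i : Fin k, ∃ v : V, f v = i ∧ IsBDominating G f v

/-- `BSet G` is the set of positive integers `k` such that `G` has a colorful `k`-coloring. -/
def BSet {V : Type*} (G : SimpleGraph V) : Set ℕ :=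
  {k | 0 < k ∧ ∃ f : V → Fin k, IsColorfulColoring G f}

/-- The b-chromatic number: the maximum of `BSet G`. -/
noncomputable def bChromaticNumber {V : Type*} (G : SimpleGraph V) : ℕ :=
  sSup (BSet G)

/-- A semi-locally-surjective graph homomorphism from `G` to `H`. -/
def IsSLSHom {V W : Type*} (G : SimpleGraph V) (H : SimpleGraph W) (f : V → W) : Prop :=
  (∀ a b : V, G.Adj a b → H.Adj (f a) (f b)) ∧
  Function.Surjective f ∧
  ∀ u : W, ∃ a : V, f a = u ∧ ∀ v : W, H.Adj u v → ∃ b : V, f b = v ∧ G.Adj a b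

/-- Vertices of the Kneser graph `KG n m`: `m`-element subsets of `{1, ..., n}`. -/
def KneserVert (n m : ℕ) : Type :=
  {A : Finset ℕ // A ⊆ Finset.Icc 1 n ∧ A.card = m}

/-- The Kneser graph `KG n m`. -/
def KG (n m : ℕ) : SimpleGraph (KneserVert n m) where
  Adj X Y := X ≠ Y ∧ Disjoint X.1 Y.1
  symm := by
    constructor
    intro X Y h
    exact ⟨h.1.symm, h.2.symm⟩
  loopless := by
    constructor
    intro X h
    exact h.1 rfl

/-!
A proper coloring pulled back along a semi-locally-surjective (SLS) homomorphism `G → H` stays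
proper, and a b-dominating vertex of `H` lifts to one of `G`; hence `B(H) ⊆ B(G)`. With
`n = 2i + a` and `m = i + b`, it therefore suffices to find an SLS homomorphism
`KG(n + 2, m + 1) → KG(n, m)`. Write `A' = A ∩ [n]`, which has `m - 1`, `m` or `m + 1` elements.
Send `A` to `A'` with its largest element removed, to `A'`, or to `A'` together with the largest
element of `[n] \ A'`, respectively. Disjointness is preserved: if `|A'| = m - 1` then
`n + 1, n + 2 ∈ A`, so a set `B` disjoint from `A` lies in `[n]`, loses its maximum, and that
maximum is at most the element added to `A'`. Local surjectivity at `U` is witnessed by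
`U ∪ {n + 1}`, whose neighbours `V ∪ {n + 2}` cover the neighbours `V` of `U`.
-/

open Finset

theorem IsSLSHom.bSet_subset {V W : Type*} {G : SimpleGraph V} {H : SimpleGraph W} {g : V → W}
    (hg : IsSLSHom G H g) : BSet H ⊆ BSet G := by
  obtain ⟨hadj, -, hlocal⟩ := hg
  rintro k ⟨hk, f, hproper, hcolorful⟩
  refine ⟨hk, f ∘ g, fun u v huv => hproper _ _ (hadj u v huv), fun c => ?_⟩
  obtain ⟨w, hwc, hdom⟩ := hcolorful c
  obtain ⟨v, rfl, hlift⟩ := hlocal w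
  refine ⟨v, hwc, fun c' => ?_⟩
  rcases hdom c' with hc' | ⟨w', hww', hw'c'⟩
  · exact Or.inl hc'
  · obtain ⟨v', rfl, hvv'⟩ := hlift w' hww'
    exact Or.inr ⟨v', hvv', hw'c'⟩

theorem KG_adj_iff_of_pos {n m : ℕ} (hm : 0 < m) {X Y : KneserVert n m} :
    (KG n m).Adj X Y ↔ Disjoint X.1 Y.1 := by
  refine ⟨And.right, fun hXY => ⟨fun h => ?_, hXY⟩⟩
  rw [h, disjoint_self_iff_empty] at hXY
  have := Y.2.2
  simp [hXY] at this
  omega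

theorem KneserVert.notMem_of_lt {n m : ℕ} (X : KneserVert n m) {t : ℕ} (ht : n < t) :
    t ∉ X.1 := by
  intro h
  have := X.2.1 h
  simp only [mem_Icc] at this
  omega

theorem Finset.sup_id_mem {α : Type*} [LinearOrder α] [OrderBot α] {s : Finset α}
    (hs : s.Nonempty) : s.sup id ∈ s := by
  obtain ⟨x, hx, hsup⟩ := s.exists_mem_eq_sup hs id
  rwa [hsup]

namespace Kneser

variable {n m : ℕ} {A B : Finset ℕ}

theorem sdiff_Icc_subset_pair (hA : A ⊆ Icc 1 (n + 2)) : A \ Icc 1 n ⊆ {n + 1, n + 2} := by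
  intro x hx
  have hx₁ := hA (mem_sdiff.1 hx).1
  have hx₂ := (mem_sdiff.1 hx).2
  simp only [mem_Icc, mem_insert, mem_singleton] at hx₁ hx₂ ⊢
  omega

theorem card_le_card_inter_Icc_add_two (hA : A ⊆ Icc 1 (n + 2)) :
    #A ≤ #(A ∩ Icc 1 n) + 2 := by
  have hsplit := card_inter_add_card_sdiff A (Icc 1 n)
  have hpair := (card_le_card (sdiff_Icc_subset_pair hA)).trans (card_insert_le _ _)
  simp only [card_singleton] at hpair
  omega

theorem pair_mem_of_card_inter_Icc_add_two_le (hA : A ⊆ Icc 1 (n + 2))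
    (h : #(A ∩ Icc 1 n) + 2 ≤ #A) : n + 1 ∈ A ∧ n + 2 ∈ A := by
  have hsplit := card_inter_add_card_sdiff A (Icc 1 n)
  have hpair : #({n + 1, n + 2} : Finset ℕ) ≤ 2 := (card_insert_le _ _).trans_eq rfl
  have heq := eq_of_subset_of_card_le (sdiff_Icc_subset_pair hA) (by omega)
  have h₁ : n + 1 ∈ A \ Icc 1 n := by simp [heq]
  have h₂ : n + 2 ∈ A \ Icc 1 n := by simp [heq]
  exact ⟨(mem_sdiff.1 h₁).1, (mem_sdiff.1 h₂).1⟩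

def squash (n m : ℕ) (A : Finset ℕ) : Finset ℕ :=
  if m < #(A ∩ Icc 1 n) then (A ∩ Icc 1 n).erase ((A ∩ Icc 1 n).sup id)
  else if #(A ∩ Icc 1 n) = m then A ∩ Icc 1 n
  else insert ((Icc 1 n \ (A ∩ Icc 1 n)).sup id) (A ∩ Icc 1 n)

theorem squash_of_card_lt (h : #(A ∩ Icc 1 n) < m) :
    squash n m A = insert ((Icc 1 n \ (A ∩ Icc 1 n)).sup id) (A ∩ Icc 1 n) := by
  rw [squash, if_neg (by omega), if_neg (by omega)]

theorem squash_subset_self (h : m ≤ #(A ∩ Icc 1 n)) : squash n m A ⊆ A := by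
  unfold squash
  split_ifs
  · exact (erase_subset _ _).trans inter_subset_left
  · exact inter_subset_left
  · omega

theorem squash_of_subset_Icc (hA : A ⊆ Icc 1 n) (hcard : #A = m + 1) :
    squash n m A = A.erase (A.sup id) := by
  rw [squash, inter_eq_left.2 hA, if_pos (by omega)]

theorem squash_insert {t : ℕ} (ht : t ∉ Icc 1 n) {U : Finset ℕ} (hU : U ⊆ Icc 1 n)
    (hcard : #U = m) : squash n m (insert t U) = U := by
  rw [squash, insert_inter_of_notMem ht, inter_eq_left.2 hU, if_neg (by omega), if_pos hcard]

theorem nonempty_Icc_sdiff_of_card_lt (hmn : m ≤ n) (h : #(A ∩ Icc 1 n) < m) :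
    (Icc 1 n \ (A ∩ Icc 1 n)).Nonempty := by
  rw [← card_pos, card_sdiff_of_subset inter_subset_right, Nat.card_Icc]
  omega

theorem squash_subset_Icc (hmn : m ≤ n) (A : Finset ℕ) : squash n m A ⊆ Icc 1 n := by
  unfold squash
  split_ifs with h₁ h₂
  · exact (erase_subset _ _).trans inter_subset_right
  · exact inter_subset_right
  · have hnew := sup_id_mem (nonempty_Icc_sdiff_of_card_lt hmn (by omega : #(A ∩ Icc 1 n) < m))
    exact insert_subset (mem_sdiff.1 hnew).1 inter_subset_right

theorem card_squash (hmn : m ≤ n) (hA : A ⊆ Icc 1 (n + 2)) (hcard : #A = m + 1) :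
    #(squash n m A) = m := by
  have hlow := card_le_card_inter_Icc_add_two (n := n) hA
  have hhigh := card_le_card (inter_subset_left (s₁ := A) (s₂ := Icc 1 n))
  unfold squash
  split_ifs with h₁ h₂
  · rw [card_erase_of_mem (sup_id_mem (card_pos.1 (by omega)))]
    omega
  · exact h₂
  · have hnew := sup_id_mem (nonempty_Icc_sdiff_of_card_lt hmn (by omega : #(A ∩ Icc 1 n) < m))
    rw [card_insert_of_notMem (mem_sdiff.1 hnew).2]
    omega

theorem disjoint_squash_of_card_inter_Icc_lt (hA : A ⊆ Icc 1 (n + 2)) (hcardA : #A = m + 1)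
    (hlow : #(A ∩ Icc 1 n) < m) (hB : B ⊆ Icc 1 (n + 2)) (hcardB : #B = m + 1)
    (hAB : Disjoint A B) : Disjoint (squash n m A) (squash n m B) := by
  obtain ⟨hn₁, hn₂⟩ := pair_mem_of_card_inter_Icc_add_two_le hA (by omega)
  have hBn : B ⊆ Icc 1 n := by
    intro x hx
    have hx₁ := hB hx
    have hx₂ : x ≠ n + 1 := fun h => disjoint_left.1 hAB (h ▸ hn₁) hx
    have hx₃ : x ≠ n + 2 := fun h => disjoint_left.1 hAB (h ▸ hn₂) hx
    simp only [mem_Icc] at hx₁ ⊢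
    omega
  have hBfree : B ⊆ Icc 1 n \ (A ∩ Icc 1 n) := fun x hx =>
    mem_sdiff.2 ⟨hBn hx, fun hxA => disjoint_left.1 hAB (mem_inter.1 hxA).1 hx⟩
  rw [squash_of_card_lt hlow, squash_of_subset_Icc hBn hcardB, disjoint_insert_left]
  refine ⟨fun hx => ?_, hAB.mono inter_subset_left (erase_subset _ _)⟩
  -- `B` avoids `A ∩ [n]`, so the element added to `A ∩ [n]` is at least the maximum of `B`.
  exact ne_of_mem_erase hx (le_antisymm (le_sup (f := id) (mem_of_mem_erase hx)) (sup_mono hBfree))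

theorem disjoint_squash (hA : A ⊆ Icc 1 (n + 2)) (hcardA : #A = m + 1)
    (hB : B ⊆ Icc 1 (n + 2)) (hcardB : #B = m + 1) (hAB : Disjoint A B) :
    Disjoint (squash n m A) (squash n m B) := by
  by_cases hlowA : #(A ∩ Icc 1 n) < m
  · exact disjoint_squash_of_card_inter_Icc_lt hA hcardA hlowA hB hcardB hAB
  by_cases hlowB : #(B ∩ Icc 1 n) < m
  · exact (disjoint_squash_of_card_inter_Icc_lt hB hcardB hlowB hA hcardA hAB.symm).symm
  exact hAB.mono (squash_subset_self (by omega)) (squash_subset_self (by omega))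

def squashVert (hmn : m ≤ n) (A : KneserVert (n + 2) (m + 1)) : KneserVert n m :=
  ⟨squash n m A.1, squash_subset_Icc hmn A.1, card_squash hmn A.2.1 A.2.2⟩

def insertTop (t : ℕ) (ht : n < t ∧ t ≤ n + 2) (U : KneserVert n m) :
    KneserVert (n + 2) (m + 1) :=
  ⟨insert t U.1,
    insert_subset (by simp only [mem_Icc]; omega) (U.2.1.trans (Icc_subset_Icc_right (by omega))),
    by rw [card_insert_of_notMem (U.notMem_of_lt ht.1), U.2.2]⟩

theorem squashVert_insertTop (hmn : m ≤ n) {t : ℕ} (ht : n < t ∧ t ≤ n + 2)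
    (U : KneserVert n m) : squashVert hmn (insertTop t ht U) = U :=
  Subtype.ext (squash_insert (by simp only [mem_Icc]; omega) U.2.1 U.2.2)

theorem disjoint_insertTop {U V : KneserVert n m} (hUV : Disjoint U.1 V.1) :
    Disjoint (insertTop (n + 1) (by omega) U).1 (insertTop (n + 2) (by omega) V).1 := by
  simp only [insertTop, disjoint_insert_left, disjoint_insert_right, mem_insert]
  exact ⟨fun h => h.elim (by omega) (U.notMem_of_lt (by omega)), V.notMem_of_lt (by omega), hUV⟩

theorem isSLSHom_squashVert (hm : 0 < m) (hmn : m ≤ n) :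
    IsSLSHom (KG (n + 2) (m + 1)) (KG n m) (squashVert hmn) := by
  refine ⟨fun A B hAB => ?_, fun U => ⟨_, squashVert_insertTop hmn (t := n + 1) (by omega) U⟩,
    fun U => ⟨_, squashVert_insertTop hmn (t := n + 1) (by omega) U, fun V hUV => ?_⟩⟩
  · exact (KG_adj_iff_of_pos hm).2 (disjoint_squash A.2.1 A.2.2 B.2.1 B.2.2 hAB.2)
  · exact ⟨_, squashVert_insertTop hmn (t := n + 2) (by omega) V,
      (KG_adj_iff_of_pos (Nat.succ_pos m)).2 (disjoint_insertTop hUV.2)⟩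

theorem bSet_KG_subset (hm : 0 < m) (hmn : m ≤ n) :
    BSet (KG n m) ⊆ BSet (KG (n + 2) (m + 1)) :=
  (isSLSHom_squashVert hm hmn).bSet_subset

end Kneser

/-- For nonnegative integers `a > 2b` and every integer `i ≥ 2`,
`B(KG(2i+a, i+b)) ⊆ B(KG(2(i+1)+a, (i+1)+b))`. -/
theorem stmt_8 (a b : ℕ) (hab : a > 2 * b) (i : ℕ) (hi : 2 ≤ i) :
    BSet (KG (2 * i + a) (i + b)) ⊆ BSet (KG (2 * (i + 1) + a) ((i + 1) + b)) := by
  rw [show 2 * (i + 1) + a = 2 * i + a + 2 by ring, show i + 1 + b = i + b + 1 by ring]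
  exact Kneser.bSet_KG_subset (by omega) (by omega)
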